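/- arXiv:1307.1674 — 4 statements merged into one kernel-verified Lean document; each statement's English description precedes it below -/
import Mathlib

section
/- Let σ'₁,…,σ'_d be real numbers and let k ≤ d be a positive integer. Then the projection of σ' onto the set {σ ∈ ℝ^d : 0 ≤ σᵢ ≤ 1 for all i, and ∑ σᵢ = k} with respect to the Euclidean norm is given coordinatewise by σᵢ = max(0, min(1, σ'ᵢ + S)) for some S ∈ ℝ chosen so that ∑ᵢ σᵢ = k. -/
/-- Projection onto the capped simplex `{σ : 0 ≤ σᵢ ≤ 1, ∑ σᵢ = k}` is given
coordinatewise by `σᵢ = max 0 (min 1 (σ'ᵢ + S))` for some shift `S`. -/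
theorem capped_simplex_projection (d k : ℕ) (hk1 : 1 ≤ k) (hkd : k ≤ d)
    (σ' : Fin d → ℝ) :
    ∃ S : ℝ,
      (∀ i, 0 ≤ max 0 (min 1 (σ' i + S)) ∧ max 0 (min 1 (σ' i + S)) ≤ 1) ∧
      (∑ i, max 0 (min 1 (σ' i + S))) = (k : ℝ) ∧
      ∀ τ : Fin d → ℝ, (∀ i, 0 ≤ τ i ∧ τ i ≤ 1) → (∑ i, τ i) = (k : ℝ) →
        ∑ i, (max 0 (min 1 (σ' i + S)) - σ' i) ^ 2 ≤ ∑ i, (τ i - σ' i) ^ 2 := by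
  have hd : 0 < d := lt_of_lt_of_le hk1 hkd
  haveI : Nonempty (Fin d) := ⟨⟨0, hd⟩⟩
  have hne : (Finset.univ : Finset (Fin d)).Nonempty := Finset.univ_nonempty
  set f : ℝ → ℝ := fun S => ∑ i, max 0 (min 1 (σ' i + S)) with hf
  have hcont : Continuous f := by
    apply continuous_finset_sum
    intro i _
    exact continuous_const.max (continuous_const.min (continuous_const.add continuous_id))
  set a : ℝ := - Finset.univ.sup' hne σ' with ha
  set b : ℝ := 1 - Finset.univ.inf' hne σ' with hb
  have hab : a ≤ b := by
    have i0 : Fin d := ⟨0, hd⟩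
    have h1 : Finset.univ.inf' hne σ' ≤ σ' i0 := Finset.inf'_le σ' (Finset.mem_univ i0)
    have h2 : σ' i0 ≤ Finset.univ.sup' hne σ' := Finset.le_sup' σ' (Finset.mem_univ i0)
    simp only [ha, hb]; linarith
  have hfa : f a = 0 := by
    rw [hf]
    apply Finset.sum_eq_zero
    intro i _
    have h1 : σ' i ≤ Finset.univ.sup' hne σ' := Finset.le_sup' σ' (Finset.mem_univ i)
    have h2 : σ' i + a ≤ 0 := by rw [ha]; linarith
    have h3 : min 1 (σ' i + a) ≤ 0 := le_trans (min_le_right _ _) h2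
    exact max_eq_left h3
  have hfb : f b = d := by
    show (∑ i, max 0 (min 1 (σ' i + b))) = (d:ℝ)
    have : ∀ i ∈ Finset.univ, max 0 (min 1 (σ' i + b)) = 1 := by
      intro i _
      have h1 : Finset.univ.inf' hne σ' ≤ σ' i := Finset.inf'_le σ' (Finset.mem_univ i)
      have h2 : (1:ℝ) ≤ σ' i + b := by rw [hb]; linarith
      rw [min_eq_left h2, max_eq_right zero_le_one]
    rw [Finset.sum_congr rfl this]
    simp
  have hk_mem : (k:ℝ) ∈ Set.Icc (f a) (f b) := by
    rw [hfa, hfb]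
    constructor
    · positivity
    · exact_mod_cast hkd
  obtain ⟨S, _, hfS⟩ := intermediate_value_Icc hab hcont.continuousOn hk_mem
  refine ⟨S, fun i => ⟨le_max_left _ _, max_le zero_le_one (min_le_left _ _)⟩, hfS, ?_⟩
  intro τ hτ hτsum
  set g : Fin d → ℝ := fun i => max 0 (min 1 (σ' i + S)) with hg
  have hsum : ∑ i, g i = (k:ℝ) := hfS
  have key : ∀ i, 0 ≤ (g i - σ' i - S) * (τ i - g i) := by
    intro i
    rcases le_or_gt (σ' i + S) 0 with h | h
    · have : g i = 0 := by
        show max 0 (min 1 (σ' i + S)) = 0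
        exact max_eq_left (le_trans (min_le_right _ _) h)
      rw [this]
      have := (hτ i).1
      nlinarith
    rcases le_or_gt 1 (σ' i + S) with h1 | h1
    · have : g i = 1 := by
        show max 0 (min 1 (σ' i + S)) = 1
        rw [min_eq_left h1, max_eq_right zero_le_one]
      rw [this]
      have := (hτ i).2
      nlinarith
    · have : g i = σ' i + S := by
        show max 0 (min 1 (σ' i + S)) = σ' i + S
        rw [min_eq_right h1.le, max_eq_right h.le]
      rw [this]
      ring_nf
      nlinarith
  have h1 : 0 ≤ ∑ i, (g i - σ' i - S) * (τ i - g i) :=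
    Finset.sum_nonneg fun i _ => key i
  have h2 : ∑ i, (τ i - g i) = 0 := by
    rw [Finset.sum_sub_distrib, hτsum, hsum]; ring
  have h3 : 0 ≤ ∑ i, (g i - σ' i) * (τ i - g i) := by
    have heq : ∑ i, (g i - σ' i) * (τ i - g i)
        = (∑ i, (g i - σ' i - S) * (τ i - g i)) + S * ∑ i, (τ i - g i) := by
      rw [Finset.mul_sum, ← Finset.sum_add_distrib]
      apply Finset.sum_congr rfl
      intro i _; ring
    rw [heq, h2, mul_zero, add_zero]
    exact h1
  have h4 : 0 ≤ ∑ i, (τ i - g i) ^ 2 := Finset.sum_nonneg fun i _ => sq_nonneg _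
  have expand : ∑ i, (τ i - σ' i) ^ 2
      = (∑ i, (g i - σ' i) ^ 2) + 2 * (∑ i, (g i - σ' i) * (τ i - g i))
        + ∑ i, (τ i - g i) ^ 2 := by
    rw [Finset.mul_sum, ← Finset.sum_add_distrib, ← Finset.sum_add_distrib]
    apply Finset.sum_congr rfl
    intro i _; ring
  calc ∑ i, (g i - σ' i) ^ 2 ≤ ∑ i, (τ i - σ' i) ^ 2 := by rw [expand]; linarith
end

section
/- Let M be a d×d real symmetric matrix with 0 ⪯ M ⪯ I and trace(M) = k for an integer 1 ≤ k ≤ d. Then M lies in the convex hull of the set of rank-k orthogonal projection matrices (symmetric matrices with eigenvalues in {0,1} and trace k). -/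
open Finset

/-- Sum of 0/1 entries over a finset is a natural number. -/
lemma sum_zero_one_nat {d : ℕ} (σ : Fin d → ℝ) (s : Finset (Fin d))
    (h : ∀ t ∈ s, σ t = 0 ∨ σ t = 1) : ∃ m : ℕ, ∑ t ∈ s, σ t = m := by
  classical
  refine ⟨(s.filter fun t => σ t = 1).card, ?_⟩
  rw [← Finset.sum_boole]
  refine Finset.sum_congr rfl fun t ht => ?_
  rcases h t ht with h0 | h1
  · rw [h0]; norm_num
  · rw [h1]; norm_num

lemma vec_rounding (d k : ℕ) :
    ∀ n (σ : Fin d → ℝ),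
      (Finset.univ.filter fun i => σ i ≠ 0 ∧ σ i ≠ 1).card ≤ n →
      (∀ i, 0 ≤ σ i ∧ σ i ≤ 1) → (∑ i, σ i) = (k : ℝ) →
      σ ∈ convexHull ℝ
        {x : Fin d → ℝ | (∀ i, x i = 0 ∨ x i = 1) ∧ (∑ i, x i) = (k : ℝ)} := by
  classical
  intro n
  induction n with
  | zero =>
      intro σ hcard h01 hsum
      refine subset_convexHull ℝ _ ⟨fun i => ?_, hsum⟩
      by_contra h
      push_neg at h
      have hi : i ∈ Finset.univ.filter fun i => σ i ≠ 0 ∧ σ i ≠ 1 := by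
        simp [h.1, h.2]
      have := Finset.card_pos.mpr ⟨i, hi⟩
      omega
  | succ n ih =>
      intro σ hcard h01 hsum
      set F := Finset.univ.filter fun i => σ i ≠ 0 ∧ σ i ≠ 1 with hF
      by_cases hFe : F = ∅
      · refine subset_convexHull ℝ _ ⟨fun i => ?_, hsum⟩
        by_contra h
        push_neg at h
        have hi : i ∈ F := by simp [hF, h.1, h.2]
        simp [hFe] at hi
      -- F nonempty; first show card F ≠ 1
      have hcard1 : F.card ≠ 1 := by
        intro h1
        obtain ⟨i, hFi⟩ := Finset.card_eq_one.mp h1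
        have hiF : i ∈ F := by simp [hFi]
        have hifrac : σ i ≠ 0 ∧ σ i ≠ 1 := by
          simpa [hF] using hiF
        have hrest : ∀ t ∈ Finset.univ.erase i, σ t = 0 ∨ σ t = 1 := by
          intro t ht
          by_contra h
          push_neg at h
          have : t ∈ F := by simp [hF, h.1, h.2]
          rw [hFi] at this
          simp at this
          exact (Finset.mem_erase.mp ht).1 this
        obtain ⟨m, hm⟩ := sum_zero_one_nat σ _ hrest
        have hsplit : σ i + ∑ t ∈ Finset.univ.erase i, σ t = (k : ℝ) := by
          rw [← hsum, Finset.add_sum_erase _ _ (Finset.mem_univ i)]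
        have h0 : 0 < σ i := lt_of_le_of_ne (h01 i).1 (Ne.symm hifrac.1)
        have h1' : σ i < 1 := lt_of_le_of_ne (h01 i).2 hifrac.2
        rw [hm] at hsplit
        have hmk : (m : ℝ) < k := by linarith
        have hkm : (k : ℝ) < m + 1 := by linarith
        have : m < k := by exact_mod_cast hmk
        have : k < m + 1 := by exact_mod_cast hkm
        omega
      have hF2 : 1 < F.card := by
        have := Finset.card_pos.mpr (Finset.nonempty_of_ne_empty hFe)
        omega
      obtain ⟨i, hiF, j, hjF, hij⟩ := Finset.one_lt_card.mp hF2
      have hifrac : σ i ≠ 0 ∧ σ i ≠ 1 := by simpa [hF] using hiF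
      have hjfrac : σ j ≠ 0 ∧ σ j ≠ 1 := by simpa [hF] using hjF
      have hi0 : 0 < σ i := lt_of_le_of_ne (h01 i).1 (Ne.symm hifrac.1)
      have hi1 : σ i < 1 := lt_of_le_of_ne (h01 i).2 hifrac.2
      have hj0 : 0 < σ j := lt_of_le_of_ne (h01 j).1 (Ne.symm hjfrac.1)
      have hj1 : σ j < 1 := lt_of_le_of_ne (h01 j).2 hjfrac.2
      set v : Fin d → ℝ := Pi.single i 1 - Pi.single j 1 with hv
      have hvi : v i = 1 := by simp [hv, Pi.single_apply, hij.symm, hij]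
      have hvj : v j = -1 := by simp [hv, Pi.single_apply, hij.symm, hij]
      have hvt : ∀ t, t ≠ i → t ≠ j → v t = 0 := by
        intro t hti htj
        simp [hv, Pi.single_apply, hti, htj]
      have hvsum : ∑ t, v t = 0 := by
        simp [hv, Finset.sum_sub_distrib, Finset.sum_pi_single']
      set ep : ℝ := min (1 - σ i) (σ j) with hep
      set em : ℝ := min (σ i) (1 - σ j) with hem
      have hep0 : 0 < ep := lt_min (by linarith) hj0
      have hem0 : 0 < em := lt_min hi0 (by linarith)
      set a : Fin d → ℝ := σ + ep • v with ha
      set b : Fin d → ℝ := σ - em • v with hb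
      have hat : ∀ t, t ≠ i → t ≠ j → a t = σ t := by
        intro t h1 h2; simp [ha, hvt t h1 h2]
      have hbt : ∀ t, t ≠ i → t ≠ j → b t = σ t := by
        intro t h1 h2; simp [hb, hvt t h1 h2]
      have hai : a i = σ i + ep := by simp [ha, hvi]
      have haj : a j = σ j - ep := by simp [ha, hvj]; try ring
      have hbi : b i = σ i - em := by simp [hb, hvi]
      have hbj : b j = σ j + em := by simp [hb, hvj]; try ring
      have hepi : ep ≤ 1 - σ i := min_le_left _ _
      have hepj : ep ≤ σ j := min_le_right _ _
      have hemi : em ≤ σ i := min_le_left _ _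
      have hemj : em ≤ 1 - σ j := min_le_right _ _
      have h01a : ∀ t, 0 ≤ a t ∧ a t ≤ 1 := by
        intro t
        by_cases h1 : t = i
        · subst h1; rw [hai]; constructor <;> linarith
        by_cases h2 : t = j
        · subst h2; rw [haj]; constructor <;> linarith
        · rw [hat t h1 h2]; exact h01 t
      have h01b : ∀ t, 0 ≤ b t ∧ b t ≤ 1 := by
        intro t
        by_cases h1 : t = i
        · subst h1; rw [hbi]; constructor <;> linarith
        by_cases h2 : t = j
        · subst h2; rw [hbj]; constructor <;> linarith
        · rw [hbt t h1 h2]; exact h01 t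
      have hsuma : ∑ t, a t = (k : ℝ) := by
        simp [ha, Finset.sum_add_distrib, ← Finset.mul_sum, hvsum, hsum]
      have hsumb : ∑ t, b t = (k : ℝ) := by
        simp [hb, Finset.sum_sub_distrib, ← Finset.mul_sum, hvsum, hsum]
      -- filter subsets
      have hsub : ∀ (c : Fin d → ℝ), (∀ t, t ≠ i → t ≠ j → c t = σ t) →
          (Finset.univ.filter fun t => c t ≠ 0 ∧ c t ≠ 1) ⊆ F := by
        intro c hc t ht
        simp only [Finset.mem_filter, Finset.mem_univ, true_and] at ht
        by_cases h1 : t = i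
        · subst h1; exact hiF
        by_cases h2 : t = j
        · subst h2; exact hjF
        · simp only [hF, Finset.mem_filter, Finset.mem_univ, true_and]
          rw [← hc t h1 h2]; exact ht
      have hcarda : (Finset.univ.filter fun t => a t ≠ 0 ∧ a t ≠ 1).card ≤ n := by
        have hss : (Finset.univ.filter fun t => a t ≠ 0 ∧ a t ≠ 1) ⊂ F := by
          refine Finset.ssubset_iff_of_subset (hsub a hat) |>.mpr ?_
          rcases le_total (1 - σ i) (σ j) with hc | hc
          · refine ⟨i, hiF, ?_⟩
            have : a i = 1 := by rw [hai, hep, min_eq_left hc]; ring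
            simp [this]
          · refine ⟨j, hjF, ?_⟩
            have : a j = 0 := by rw [haj, hep, min_eq_right hc]; ring
            simp [this]
        have := Finset.card_lt_card hss
        omega
      have hcardb : (Finset.univ.filter fun t => b t ≠ 0 ∧ b t ≠ 1).card ≤ n := by
        have hss : (Finset.univ.filter fun t => b t ≠ 0 ∧ b t ≠ 1) ⊂ F := by
          refine Finset.ssubset_iff_of_subset (hsub b hbt) |>.mpr ?_
          rcases le_total (σ i) (1 - σ j) with hc | hc
          · refine ⟨i, hiF, ?_⟩
            have : b i = 0 := by rw [hbi, hem, min_eq_left hc]; ring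
            simp [this]
          · refine ⟨j, hjF, ?_⟩
            have : b j = 1 := by rw [hbj, hem, min_eq_right hc]; ring
            simp [this]
        have := Finset.card_lt_card hss
        omega
      have hamem := ih a hcarda h01a hsuma
      have hbmem := ih b hcardb h01b hsumb
      have hs0 : 0 < ep + em := by linarith
      have hcomb : (em / (ep + em)) • a + (ep / (ep + em)) • b = σ := by
        funext t
        simp only [ha, hb, Pi.add_apply, Pi.smul_apply, Pi.sub_apply, smul_eq_mul]
        field_simp
        ring
      have := (convex_convexHull ℝ _) hamem hbmem
        (le_of_lt (div_pos hem0 hs0)) (le_of_lt (div_pos hep0 hs0))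
        (by field_simp; try ring)
      rwa [hcomb] at this

open Matrix in
/-- Rounding lemma (matrix form): any symmetric `M` with `0 ⪯ M ⪯ I` and
`trace M = k` lies in the convex hull of the rank-`k` orthogonal projections. -/
theorem mem_convexHull_rank_k_projections (d k : ℕ) (hk1 : 1 ≤ k) (hkd : k ≤ d)
    (M : Matrix (Fin d) (Fin d) ℝ)
    (hsymm : M.IsSymm) (hpsd : M.PosSemidef) (hle : (1 - M).PosSemidef)
    (htr : M.trace = (k : ℝ)) :
    M ∈ convexHull ℝ
      {P : Matrix (Fin d) (Fin d) ℝ | P.IsSymm ∧ P * P = P ∧ P.trace = (k : ℝ)} := by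
  classical
  have hM : M.IsHermitian := hpsd.1
  set σ : Fin d → ℝ := hM.eigenvalues with hσ
  set W : Matrix (Fin d) (Fin d) ℝ := (Matrix.IsHermitian.eigenvectorUnitary hM : Matrix (Fin d) (Fin d) ℝ) with hW
  have hWW : W * star W = 1 :=
    (Matrix.mem_unitaryGroup_iff).mp (Matrix.IsHermitian.eigenvectorUnitary hM).2
  have hWW' : star W * W = 1 :=
    (Matrix.mem_unitaryGroup_iff').mp (Matrix.IsHermitian.eigenvectorUnitary hM).2
  have hspec : M = W * diagonal σ * star W := by
    have := hM.spectral_theorem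
    rwa [RCLike.ofReal_real_eq_id, Function.id_comp] at this
  -- eigenvalue bounds
  have h0 : ∀ i, 0 ≤ σ i := fun i => hpsd.eigenvalues_nonneg i
  have h1 : ∀ i, σ i ≤ 1 := by
    intro i
    set v : Fin d → ℝ := ⇑(hM.eigenvectorBasis i) with hv
    have hvv : star v ⬝ᵥ v = 1 := by
      have := hM.eigenvectorBasis.orthonormal.1 i
      rw [hv, dotProduct_comm, ← EuclideanSpace.inner_eq_star_dotProduct, inner_self_eq_norm_sq_to_K, this]
      norm_num
    have heig : σ i = star v ⬝ᵥ (M *ᵥ v) := by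
      have := hM.eigenvalues_eq i
      simpa using this
    have hnn := hle.re_dotProduct_nonneg v
    simp only [RCLike.re_to_real] at hnn
    rw [Matrix.sub_mulVec, Matrix.one_mulVec, dotProduct_sub, hvv, ← heig] at hnn
    linarith
  have hsum : ∑ i, σ i = (k : ℝ) := by
    have : M.trace = ∑ i, σ i := by
      rw [hspec, Matrix.trace_mul_cycle, hWW', Matrix.one_mul, Matrix.trace_diagonal]
    rw [← this, htr]
  -- the linear conjugation map
  set L : (Fin d → ℝ) →ₗ[ℝ] Matrix (Fin d) (Fin d) ℝ :=
    { toFun := fun x => W * diagonal x * star W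
      map_add' := by
        intro x y
        show W * diagonal (x + y) * star W = W * diagonal x * star W + W * diagonal y * star W
        have : diagonal (x + y) = diagonal x + diagonal y := by
          rw [Matrix.diagonal_add]; rfl
        rw [this, Matrix.mul_add, Matrix.add_mul]
      map_smul' := by
        intro c x
        show W * diagonal (c • x) * star W = c • (W * diagonal x * star W)
        rw [Matrix.diagonal_smul, Matrix.mul_smul, Matrix.smul_mul] } with hL
  have hmem := vec_rounding d k d σ (le_trans (Finset.card_le_card (Finset.filter_subset _ _)) (by simp)) (fun i => ⟨h0 i, h1 i⟩) hsum
  have himg : L σ ∈ convexHull ℝ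
      (L '' {x : Fin d → ℝ | (∀ i, x i = 0 ∨ x i = 1) ∧ (∑ i, x i) = (k : ℝ)}) := by
    rw [← L.image_convexHull]
    exact Set.mem_image_of_mem _ hmem
  have hsubset : L '' {x : Fin d → ℝ | (∀ i, x i = 0 ∨ x i = 1) ∧ (∑ i, x i) = (k : ℝ)} ⊆
      {P : Matrix (Fin d) (Fin d) ℝ | P.IsSymm ∧ P * P = P ∧ P.trace = (k : ℝ)} := by
    rintro P ⟨x, ⟨hx01, hxsum⟩, rfl⟩
    refine ⟨?_, ?_, ?_⟩
    · show ((W * diagonal x * star W)ᵀ = W * diagonal x * star W)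
      rw [← Matrix.conjTranspose_eq_transpose_of_trivial]
      simp only [Matrix.conjTranspose_mul, Matrix.diagonal_conjTranspose, Matrix.mul_assoc,
        Matrix.star_eq_conjTranspose, Matrix.conjTranspose_conjTranspose, star_trivial]
    · show (W * diagonal x * star W) * (W * diagonal x * star W) = W * diagonal x * star W
      have hxsq : (fun i => x i * x i) = x := by
        funext t
        rcases hx01 t with h | h <;> rw [h] <;> ring
      have hxx : diagonal x * diagonal x = diagonal x := by
        rw [Matrix.diagonal_mul_diagonal, hxsq]
      calc W * diagonal x * star W * (W * diagonal x * star W)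
          = W * diagonal x * (star W * W) * diagonal x * star W := by
            simp only [Matrix.mul_assoc]
        _ = W * diagonal x * star W := by
            rw [hWW', Matrix.mul_one, Matrix.mul_assoc W, hxx]
    · show (W * diagonal x * star W).trace = (k : ℝ)
      rw [Matrix.trace_mul_cycle, hWW', Matrix.one_mul, Matrix.trace_diagonal, hxsum]
  have : L σ = M := by
    simp only [hL, LinearMap.coe_mk, AddHom.coe_mk, ← hspec]
  rw [← this]
  exact convexHull_mono hsubset himg
end

section
/- A vector σ ∈ ℝ^d with 0 ≤ σᵢ ≤ 1 for all i and ∑ᵢ σᵢ = k (k a positive integer, k ≤ d) can be written as a convex combination of at most d vectors, each of which lies in {0,1}^d and has exactly k coordinates equal to 1. -/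
open Finset

/-- Sum of a 0-1 valued function over a finset equals the number of ones. -/
lemma sum_01_card {d : ℕ} (σ : Fin d → ℝ) (s : Finset (Fin d))
    (h : ∀ i ∈ s, σ i = 0 ∨ σ i = 1) :
    ∑ i ∈ s, σ i = ((s.filter (fun i => σ i = 1)).card : ℝ) := by
  rw [← Finset.sum_filter_add_sum_filter_not s (fun i => σ i = 1)]
  have h1 : ∑ i ∈ s.filter (fun i => σ i = 1), σ i
      = ((s.filter (fun i => σ i = 1)).card : ℝ) := by
    rw [Finset.sum_congr rfl (fun i hi => (Finset.mem_filter.1 hi).2)]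
    simp
  have h2 : ∑ i ∈ s.filter (fun i => ¬ σ i = 1), σ i = 0 := by
    apply Finset.sum_eq_zero
    intro i hi
    rcases Finset.mem_filter.1 hi with ⟨his, hne⟩
    rcases h i his with h0 | h1'
    · exact h0
    · exact absurd h1' hne
  rw [h1, h2, add_zero]

/-- The number of fractional coordinates of a vector in a capped simplex
cannot be exactly one. -/
lemma frac_card_ne_one {d k : ℕ} (σ : Fin d → ℝ)
    (h01 : ∀ i, 0 ≤ σ i ∧ σ i ≤ 1) (hsum : (∑ i, σ i) = (k : ℝ)) :
    (Finset.univ.filter (fun i => σ i ≠ 0 ∧ σ i ≠ 1)).card ≠ 1 := by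
  intro hcard
  obtain ⟨i1, hi1⟩ := Finset.card_eq_one.1 hcard
  have hi1mem : i1 ∈ Finset.univ.filter (fun i => σ i ≠ 0 ∧ σ i ≠ 1) := by
    rw [hi1]; exact Finset.mem_singleton_self i1
  have hfrac : σ i1 ≠ 0 ∧ σ i1 ≠ 1 := (Finset.mem_filter.1 hi1mem).2
  have hrest : ∀ i ∈ Finset.univ.erase i1, σ i = 0 ∨ σ i = 1 := by
    intro i hi
    have hne : i ≠ i1 := (Finset.mem_erase.1 hi).1
    by_contra hcon
    push_neg at hcon
    have : i ∈ Finset.univ.filter (fun i => σ i ≠ 0 ∧ σ i ≠ 1) := by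
      simp [hcon.1, hcon.2]
    rw [hi1] at this
    exact hne (Finset.mem_singleton.1 this)
  have hsum' : σ i1 + ∑ i ∈ Finset.univ.erase i1, σ i = (k : ℝ) := by
    rw [Finset.add_sum_erase _ _ (Finset.mem_univ i1)]; exact hsum
  rw [sum_01_card σ _ hrest] at hsum'
  set m := ((Finset.univ.erase i1).filter (fun i => σ i = 1)).card with hm
  have h0 : 0 < σ i1 := lt_of_le_of_ne (h01 i1).1 (Ne.symm hfrac.1)
  have h1 : σ i1 < 1 := lt_of_le_of_ne (h01 i1).2 hfrac.2
  have hmk : (m : ℝ) < (k : ℝ) := by linarith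
  have hkm : (k : ℝ) < (m : ℝ) + 1 := by linarith
  have : m < k := by exact_mod_cast hmk
  have : (k : ℝ) ≥ (m : ℝ) + 1 := by exact_mod_cast this
  linarith

lemma capped_aux (d k : ℕ) (hk1 : 1 ≤ k) (hkd : k ≤ d) :
    ∀ n (σ : Fin d → ℝ), (∀ i, 0 ≤ σ i ∧ σ i ≤ 1) → (∑ i, σ i) = (k : ℝ) →
    (Finset.univ.filter (fun i => σ i ≠ 0 ∧ σ i ≠ 1)).card = n →
    ∃ (w : Fin d → ℝ) (v : Fin d → (Fin d → ℝ)),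
      (∀ j, 0 ≤ w j) ∧ (∑ j, w j) = 1 ∧
      (∀ j, (∀ i, v j i = 0 ∨ v j i = 1) ∧
        (Finset.univ.filter (fun i => v j i = 1)).card = k) ∧
      σ = (∑ j, w j • v j) ∧
      (Finset.univ.filter (fun j => w j ≠ 0)).card ≤ max n 1 := by
  intro n
  induction n using Nat.strong_induction_on with
  | _ n ih =>
  intro σ h01 hsum hn
  have hd1 : 1 ≤ d := le_trans hk1 hkd
  rcases Nat.eq_zero_or_pos n with hn0 | hnpos
  · -- base case: σ is itself a vertex
    subst hn0
    have hall : ∀ i, σ i = 0 ∨ σ i = 1 := by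
      intro i
      by_contra hcon
      push_neg at hcon
      have : i ∈ Finset.univ.filter (fun i => σ i ≠ 0 ∧ σ i ≠ 1) := by
        simp [hcon.1, hcon.2]
      rw [Finset.card_eq_zero.1 hn] at this
      exact absurd this (Finset.notMem_empty i)
    have hcard : (Finset.univ.filter (fun i => σ i = 1)).card = k := by
      have := sum_01_card σ Finset.univ (fun i _ => hall i)
      rw [hsum] at this
      exact_mod_cast this.symm
    refine ⟨fun j => if j = ⟨0, hd1⟩ then 1 else 0, fun _ => σ, ?_, ?_, ?_, ?_, ?_⟩
    · intro j; dsimp only; split <;> norm_num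
    · simp
    · intro j; exact ⟨hall, hcard⟩
    · funext i
      rw [Finset.sum_apply]
      simp [Pi.smul_apply, smul_eq_mul, ite_mul]
    · calc (Finset.univ.filter (fun j => (if j = (⟨0, hd1⟩ : Fin d) then (1:ℝ) else 0) ≠ 0)).card
          ≤ ({⟨0, hd1⟩} : Finset (Fin d)).card := by
            apply Finset.card_le_card
            intro j hj
            simp only [Finset.mem_filter, Finset.mem_univ, true_and] at hj
            simp only [Finset.mem_singleton]
            by_contra hne
            exact hj (if_neg hne)
        _ ≤ max 0 1 := by simp
  · -- inductive step: n ≥ 1 fractional coordinates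
    set F := Finset.univ.filter (fun i => σ i ≠ 0 ∧ σ i ≠ 1) with hF
    have hFne : F.Nonempty := Finset.card_pos.1 (by rw [hn]; exact hnpos)
    have hne1 : n ≠ 1 := by rw [← hn]; exact frac_card_ne_one σ h01 hsum
    have hn2 : 2 ≤ n := by omega
    have hnd : n ≤ d := by
      rw [← hn]
      calc F.card ≤ Finset.univ.card := Finset.card_le_univ F
        _ = d := by simp
    have hFmem : ∀ i ∈ F, 0 < σ i ∧ σ i < 1 := by
      intro i hi
      have h2 := (Finset.mem_filter.1 hi).2
      exact ⟨lt_of_le_of_ne (h01 i).1 (Ne.symm h2.1), lt_of_le_of_ne (h01 i).2 h2.2⟩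
    -- choose a vertex support T with ones ⊆ T ⊆ positives
    set A := Finset.univ.filter (fun i => σ i = 1) with hA
    set B := Finset.univ.filter (fun i => 0 < σ i) with hB
    have hAB : A ⊆ B := by
      intro i hi
      have := (Finset.mem_filter.1 hi).2
      simp only [hB, Finset.mem_filter, Finset.mem_univ, true_and]
      rw [this]; norm_num
    have hAk : A.card ≤ k := by
      have h1 : ∑ i ∈ A, σ i = (A.card : ℝ) := by
        rw [Finset.sum_congr rfl (fun i hi => (Finset.mem_filter.1 hi).2)]; simp; rfl
      have h2 : ∑ i ∈ A, σ i ≤ ∑ i, σ i :=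
        Finset.sum_le_sum_of_subset_of_nonneg (Finset.subset_univ A)
          (fun i _ _ => (h01 i).1)
      rw [h1, hsum] at h2
      exact_mod_cast h2
    have hkB : k ≤ B.card := by
      have h1 : ∑ i, σ i = ∑ i ∈ B, σ i := by
        rw [hB]
        exact (Finset.sum_filter_of_ne (fun i _ hne =>
          lt_of_le_of_ne (h01 i).1 (Ne.symm hne))).symm
      have h2 : ∑ i ∈ B, σ i ≤ ∑ i ∈ B, (1 : ℝ) :=
        Finset.sum_le_sum (fun i _ => (h01 i).2)
      rw [← h1, hsum] at h2
      simp only [Finset.sum_const, nsmul_eq_mul, mul_one] at h2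
      exact_mod_cast h2
    obtain ⟨T, hAT, hTB, hT⟩ := Finset.exists_subsuperset_card_eq hAB hAk hkB
    set v0 : Fin d → ℝ := fun i => if i ∈ T then 1 else 0 with hv0
    have hv0sum : ∑ i, v0 i = (k : ℝ) := by
      rw [hv0]
      simp [Finset.sum_ite_mem, hT]
    have hv0card : (Finset.univ.filter (fun i => v0 i = 1)).card = k := by
      have : Finset.univ.filter (fun i => v0 i = 1) = T := by
        ext i
        by_cases hiT : i ∈ T <;> simp [hv0, hiT]
      rw [this, hT]
    -- the stretch factor
    set c : Fin d → ℝ := fun i => if i ∈ T then (1 - σ i)⁻¹ else (σ i)⁻¹ with hc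
    set s := F.inf' hFne c with hsdef
    have hs_le : ∀ i ∈ F, s ≤ c i := fun i hi => Finset.inf'_le c hi
    have hs1 : (1 : ℝ) < s := by
      rw [hsdef, Finset.lt_inf'_iff]
      intro i hi
      obtain ⟨hp, hl⟩ := hFmem i hi
      rw [hc]
      by_cases hiT : i ∈ T
      · simp only [hiT, if_true]
        rw [one_lt_inv_iff₀]
        constructor <;> linarith
      · simp only [hiT, if_false]
        rw [one_lt_inv_iff₀]
        exact ⟨hp, hl⟩
    have hs0 : (0 : ℝ) < s := lt_trans one_pos hs1
    have hsne : s ≠ 0 := ne_of_gt hs0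
    obtain ⟨i0, hi0F, hi0⟩ := Finset.exists_mem_eq_inf' hFne c
    set τ : Fin d → ℝ := fun i => v0 i + s * (σ i - v0 i) with hτ
    have hout : ∀ i, (σ i = 0 ∨ σ i = 1) → τ i = σ i := by
      intro i hi
      rcases hi with h0 | h1
      · have hiT : i ∉ T := by
          intro hiT
          have := (Finset.mem_filter.1 (hTB hiT)).2
          rw [h0] at this
          exact lt_irrefl 0 this
        simp [hτ, hv0, hiT, h0]
      · have hiT : i ∈ T := hAT (by simp [hA, h1])
        simp [hτ, hv0, hiT, h1]
    have houtF : ∀ i, i ∉ F → τ i = σ i := by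
      intro i hi
      apply hout
      by_contra hcon
      push_neg at hcon
      exact hi (by simp [hF, hcon.1, hcon.2])
    have hbound : ∀ i, 0 ≤ τ i ∧ τ i ≤ 1 := by
      intro i
      by_cases hiF : i ∈ F
      · obtain ⟨hp, hl⟩ := hFmem i hiF
        have hle := hs_le i hiF
        by_cases hiT : i ∈ T
        · rw [hc] at hle
          simp only [hiT, if_true] at hle
          have hp1 : (0 : ℝ) < 1 - σ i := by linarith
          have hm : s * (1 - σ i) ≤ (1 - σ i)⁻¹ * (1 - σ i) :=
            mul_le_mul_of_nonneg_right hle (le_of_lt hp1)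
          rw [inv_mul_cancel₀ (ne_of_gt hp1)] at hm
          have hτi : τ i = 1 + s * (σ i - 1) := by simp [hτ, hv0, hiT]
          constructor
          · rw [hτi]; nlinarith
          · rw [hτi]; nlinarith
        · rw [hc] at hle
          simp only [hiT, if_false] at hle
          have hm : s * σ i ≤ (σ i)⁻¹ * σ i :=
            mul_le_mul_of_nonneg_right hle (le_of_lt hp)
          rw [inv_mul_cancel₀ (ne_of_gt hp)] at hm
          have hτi : τ i = s * σ i := by simp [hτ, hv0, hiT]
          constructor
          · rw [hτi]; positivity
          · rw [hτi]; linarith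
      · rw [houtF i hiF]; exact h01 i
    have hτsum : ∑ i, τ i = (k : ℝ) := by
      calc ∑ i, τ i = ∑ i, ((1 - s) * v0 i + s * σ i) :=
            Finset.sum_congr rfl (fun i _ => by rw [hτ]; ring)
        _ = (1 - s) * (∑ i, v0 i) + s * (∑ i, σ i) := by
            rw [Finset.sum_add_distrib, Finset.mul_sum, Finset.mul_sum]
        _ = (k : ℝ) := by rw [hv0sum, hsum]; ring
    have hτi0 : τ i0 = 0 ∨ τ i0 = 1 := by
      obtain ⟨hp, hl⟩ := hFmem i0 hi0F
      by_cases hiT : i0 ∈ T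
      · left
        have : s = (1 - σ i0)⁻¹ := by rw [hsdef, hi0, hc]; simp [hiT]
        have hne : (1 : ℝ) - σ i0 ≠ 0 := by intro h; linarith [hl]
        simp only [hτ, hv0, hiT, if_true]
        rw [this]
        field_simp
        ring
      · right
        have : s = (σ i0)⁻¹ := by rw [hsdef, hi0, hc]; simp [hiT]
        simp only [hτ, hv0, hiT, if_false]
        rw [this]
        field_simp
        ring
    -- fractional set of τ shrinks
    have hτsub : Finset.univ.filter (fun i => τ i ≠ 0 ∧ τ i ≠ 1) ⊆ F.erase i0 := by
      intro i hi
      have h2 := (Finset.mem_filter.1 hi).2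
      have hiF : i ∈ F := by
        by_contra hcon
        rcases hout i (by
          by_contra hc2
          push_neg at hc2
          exact hcon (by simp [hF, hc2.1, hc2.2])) with h
        rw [h] at h2
        rcases (by
          by_contra hc2
          push_neg at hc2
          exact hcon (by simp [hF, hc2.1, hc2.2]) : σ i = 0 ∨ σ i = 1) with h0 | h1
        · exact h2.1 h0
        · exact h2.2 h1
      refine Finset.mem_erase.2 ⟨?_, hiF⟩
      intro heq
      rw [heq] at h2
      rcases hτi0 with h0 | h1
      · exact h2.1 h0
      · exact h2.2 h1
    have hτcard : (Finset.univ.filter (fun i => τ i ≠ 0 ∧ τ i ≠ 1)).card < n := by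
      calc (Finset.univ.filter (fun i => τ i ≠ 0 ∧ τ i ≠ 1)).card
          ≤ (F.erase i0).card := Finset.card_le_card hτsub
        _ = n - 1 := by rw [Finset.card_erase_of_mem hi0F, hn]
        _ < n := by omega
    have hτcard' : (Finset.univ.filter (fun i => τ i ≠ 0 ∧ τ i ≠ 1)).card ≤ n - 1 := by
      have := Finset.card_le_card hτsub
      rw [Finset.card_erase_of_mem hi0F, hn] at this
      exact this
    obtain ⟨w1, v1, hw1nn, hw1sum, hv1, hτdec, hw1supp⟩ :=
      ih _ hτcard τ hbound hτsum rfl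
    have hsupp_le : (Finset.univ.filter (fun j => w1 j ≠ 0)).card ≤ n - 1 := by
      have h2 : max (Finset.univ.filter (fun i => τ i ≠ 0 ∧ τ i ≠ 1)).card 1 ≤ n - 1 := by
        omega
      exact le_trans hw1supp h2
    -- a free slot
    have hfree : ∃ j0, w1 j0 = 0 := by
      by_contra hcon
      push_neg at hcon
      have : Finset.univ.filter (fun j => w1 j ≠ 0) = Finset.univ :=
        Finset.filter_true_of_mem (fun j _ => hcon j)
      rw [this] at hsupp_le
      simp only [Finset.card_univ, Fintype.card_fin] at hsupp_le
      omega
    obtain ⟨j0, hj0⟩ := hfree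
    -- assemble
    have hinv0 : (0 : ℝ) < s⁻¹ := inv_pos.2 hs0
    have hinv1 : s⁻¹ < 1 := by
      rw [inv_lt_one_iff₀]; right; exact hs1
    refine ⟨fun j => if j = j0 then 1 - s⁻¹ else s⁻¹ * w1 j,
            fun j => if j = j0 then v0 else v1 j, ?_, ?_, ?_, ?_, ?_⟩
    · intro j
      dsimp only
      split
      · linarith
      · exact mul_nonneg (le_of_lt hinv0) (hw1nn j)
    · rw [← Finset.add_sum_erase _ _ (Finset.mem_univ j0)]
      simp only [if_pos rfl]
      have h2 : ∑ j ∈ Finset.univ.erase j0,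
          (if j = j0 then 1 - s⁻¹ else s⁻¹ * w1 j) = s⁻¹ * ∑ j ∈ Finset.univ.erase j0, w1 j := by
        rw [Finset.mul_sum]
        exact Finset.sum_congr rfl (fun j hj => if_neg (Finset.mem_erase.1 hj).1)
      rw [h2]
      have h3 : ∑ j ∈ Finset.univ.erase j0, w1 j = 1 := by
        have := Finset.add_sum_erase Finset.univ w1 (Finset.mem_univ j0)
        rw [hj0, zero_add] at this
        rw [this, hw1sum]
      rw [h3]
      simp
    · intro j
      dsimp only
      split
      · constructor
        · intro i
          rw [hv0]
          dsimp only
          split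
          · right; rfl
          · left; rfl
        · exact hv0card
      · exact hv1 j
    · funext i
      rw [Finset.sum_apply]
      have hτi : τ i = ∑ j, w1 j * v1 j i := by
        have := congrFun hτdec i
        rw [Finset.sum_apply] at this
        simpa using this
      have hτerase : ∑ j ∈ Finset.univ.erase j0, w1 j * v1 j i = τ i := by
        have h4 : w1 j0 * v1 j0 i + ∑ j ∈ Finset.univ.erase j0, w1 j * v1 j i
            = ∑ j, w1 j * v1 j i :=
          Finset.add_sum_erase Finset.univ (fun j => w1 j * v1 j i) (Finset.mem_univ j0)
        rw [hj0, zero_mul, zero_add] at h4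
        rw [h4, ← hτi]
      rw [← Finset.add_sum_erase _ _ (Finset.mem_univ j0)]
      simp only [if_pos rfl, Pi.smul_apply, smul_eq_mul]
      have h2 : ∑ j ∈ Finset.univ.erase j0,
          ((if j = j0 then 1 - s⁻¹ else s⁻¹ * w1 j) *
            (if j = j0 then v0 else v1 j) i)
          = s⁻¹ * ∑ j ∈ Finset.univ.erase j0, w1 j * v1 j i := by
        rw [Finset.mul_sum]
        refine Finset.sum_congr rfl (fun j hj => ?_)
        have hne := (Finset.mem_erase.1 hj).1
        rw [if_neg hne, if_neg hne]
        ring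
      rw [h2, hτerase]
      have hτival : τ i = v0 i + s * (σ i - v0 i) := rfl
      rw [hτival]
      field_simp
      simp only [↓reduceIte]
      field_simp
      ring
    · calc (Finset.univ.filter (fun j =>
            (if j = j0 then 1 - s⁻¹ else s⁻¹ * w1 j) ≠ 0)).card
          ≤ (insert j0 (Finset.univ.filter (fun j => w1 j ≠ 0))).card := by
            apply Finset.card_le_card
            intro j hj
            have h2 := (Finset.mem_filter.1 hj).2
            by_cases hje : j = j0
            · rw [hje]; exact Finset.mem_insert_self _ _
            · rw [if_neg hje] at h2
              have : w1 j ≠ 0 := by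
                intro h0
                rw [h0, mul_zero] at h2
                exact h2 rfl
              exact Finset.mem_insert_of_mem (by simp [this])
        _ ≤ (Finset.univ.filter (fun j => w1 j ≠ 0)).card + 1 :=
            Finset.card_insert_le _ _
        _ ≤ max n 1 := by omega

/-- Rounding lemma (vector form): a vector in the capped simplex is a convex
combination of at most `d` zero-one vectors each having exactly `k` ones. -/
theorem capped_simplex_convex_combination (d k : ℕ) (hk1 : 1 ≤ k) (hkd : k ≤ d)
    (σ : Fin d → ℝ) (h01 : ∀ i, 0 ≤ σ i ∧ σ i ≤ 1) (hsum : (∑ i, σ i) = (k : ℝ)) :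
    ∃ (w : Fin d → ℝ) (v : Fin d → (Fin d → ℝ)),
      (∀ j, 0 ≤ w j) ∧ (∑ j, w j) = 1 ∧
      (∀ j, (∀ i, v j i = 0 ∨ v j i = 1) ∧
        (Finset.univ.filter (fun i => v j i = 1)).card = k) ∧
      σ = ∑ j, w j • v j := by
  obtain ⟨w, v, h1, h2, h3, h4, _⟩ := capped_aux d k hk1 hkd _ σ h01 hsum rfl
  exact ⟨w, v, h1, h2, h3, h4⟩
end

section
/- Let M' = M + ηxxᵀ where M is symmetric PSD, x ∈ ℝ^d, η > 0, and let P be the Frobenius projection of M' onto a closed convex set K of symmetric matrices that is invariant under conjugation by orthogonal matrices commuting with M' (e.g., {N : 0 ⪯ N ⪯ I, trace N = k}). Then P commutes with M'. -/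
open Matrix

lemma sq_sum_eq_trace {d : ℕ} (C : Matrix (Fin d) (Fin d) ℝ) :
    ∑ i, ∑ j, (C i j) ^ 2 = trace (Cᴴ * C) := by
  simp only [trace, Matrix.diag, mul_apply, conjTranspose_apply, star_trivial]
  rw [Finset.sum_comm]
  simp [sq]

lemma psd_diag_nonneg {d : ℕ} {C : Matrix (Fin d) (Fin d) ℝ} (h : C.PosSemidef) (i : Fin d) :
    0 ≤ C i i := by
  exact h.diag_nonneg

/-- The Frobenius projection of `M' = M + η xxᵀ` onto
`{N symm : 0 ⪯ N ⪯ I, trace N = k}` commutes with `M'`. -/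
theorem projection_commutes (d k : ℕ)
    (M : Matrix (Fin d) (Fin d) ℝ) (hMsymm : M.IsSymm) (hMpsd : M.PosSemidef)
    (x : Fin d → ℝ) (η : ℝ) (hη : 0 < η)
    (P : Matrix (Fin d) (Fin d) ℝ)
    (hfeas : P.IsSymm ∧ P.PosSemidef ∧ (1 - P).PosSemidef ∧ P.trace = (k : ℝ))
    (hmin : ∀ N : Matrix (Fin d) (Fin d) ℝ, N.IsSymm → N.PosSemidef →
      (1 - N).PosSemidef → N.trace = (k : ℝ) →
      ∑ i, ∑ j, ((P - (M + η • Matrix.vecMulVec x x)) i j) ^ 2 ≤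
        ∑ i, ∑ j, ((N - (M + η • Matrix.vecMulVec x x)) i j) ^ 2) :
    P * (M + η • Matrix.vecMulVec x x) = (M + η • Matrix.vecMulVec x x) * P := by
  obtain ⟨hPsymm, hPpsd, hPle, hPtr⟩ := hfeas
  set A := M + η • Matrix.vecMulVec x x with hAdef
  have hAsymm : A.IsSymm := by
    have hv : (Matrix.vecMulVec x x)ᵀ = Matrix.vecMulVec x x := by
      ext i j; simp [Matrix.vecMulVec_apply, Matrix.transpose_apply, mul_comm]
    show Aᵀ = A
    rw [hAdef, transpose_add, transpose_smul, hv, hMsymm]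
  have hA : A.IsHermitian := by
    rw [IsHermitian, conjTranspose_eq_transpose_of_trivial]; exact hAsymm
  set U : Matrix (Fin d) (Fin d) ℝ := (hA.eigenvectorUnitary : Matrix (Fin d) (Fin d) ℝ) with hUdef
  have hU1 : star U * U = 1 := Unitary.coe_star_mul_self hA.eigenvectorUnitary
  have hU2 : U * star U = 1 := Unitary.coe_mul_star_self hA.eigenvectorUnitary
  set D : Matrix (Fin d) (Fin d) ℝ := diagonal (RCLike.ofReal ∘ hA.eigenvalues) with hDdef
  have hspec : A = U * D * star U := hA.spectral_theorem
  set Q : Matrix (Fin d) (Fin d) ℝ := star U * P * U with hQdef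
  have hPQ : P = U * Q * star U := by
    rw [hQdef]
    calc P = (U * star U) * P * (U * star U) := by rw [hU2]; simp [Matrix.mul_assoc]
    _ = U * (star U * P * U) * star U := by noncomm_ring
  set dQ : Matrix (Fin d) (Fin d) ℝ := diagonal (fun i => Q i i) with hdQdef
  set N : Matrix (Fin d) (Fin d) ℝ := U * dQ * star U with hNdef
  clear_value N dQ Q D U
  have hQpsd : Q.PosSemidef := by
    have := hPpsd.conjTranspose_mul_mul_same U
    rw [← star_eq_conjTranspose] at this
    rw [hQdef]; exact this
  have hQ1psd : (1 - Q).PosSemidef := by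
    have := hPle.conjTranspose_mul_mul_same U
    rw [← star_eq_conjTranspose] at this
    have e : star U * (1 - P) * U = 1 - Q := by
      rw [hQdef, Matrix.mul_sub, Matrix.sub_mul, Matrix.mul_one, hU1]
    rwa [e] at this
  -- feasibility of N
  have hNsymm : N.IsSymm := by
    have : N.IsHermitian := by
      rw [hNdef]
      have hd : dQᴴ = dQ := by
        rw [hdQdef, diagonal_conjTranspose]
        congr 1
      rw [IsHermitian, conjTranspose_mul, conjTranspose_mul, hd,
        star_eq_conjTranspose, conjTranspose_conjTranspose, ← star_eq_conjTranspose,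
        Matrix.mul_assoc]
    rw [Matrix.IsSymm, ← conjTranspose_eq_transpose_of_trivial]; exact this
  have hNpsd : N.PosSemidef := by
    have hdpsd : dQ.PosSemidef := by
      rw [hdQdef]; exact PosSemidef.diagonal (fun i => psd_diag_nonneg hQpsd i)
    have := hdpsd.mul_mul_conjTranspose_same U
    rw [← star_eq_conjTranspose] at this
    rw [hNdef]; exact this
  have hN1 : (1 : Matrix (Fin d) (Fin d) ℝ) - N = U * (1 - dQ) * star U := by
    rw [hNdef, Matrix.mul_sub, Matrix.sub_mul, Matrix.mul_one, hU2]
  have hN1psd : (1 - N).PosSemidef := by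
    rw [hN1]
    have h1 : (1 : Matrix (Fin d) (Fin d) ℝ) - dQ = diagonal (fun i => 1 - Q i i) := by
      rw [hdQdef, ← diagonal_one, diagonal_sub]
    have hdpsd : ((1 : Matrix (Fin d) (Fin d) ℝ) - dQ).PosSemidef := by
      rw [h1]
      refine PosSemidef.diagonal (fun i => ?_)
      simpa [Matrix.sub_apply, Matrix.one_apply_eq] using psd_diag_nonneg hQ1psd i
    have := hdpsd.mul_mul_conjTranspose_same U
    rwa [← star_eq_conjTranspose] at this
  have htrN : N.trace = (k : ℝ) := by
    rw [hNdef, trace_mul_cycle, hU1, Matrix.one_mul]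
    have : dQ.trace = Q.trace := by simp [hdQdef, trace, Matrix.diag]
    rw [this, hQdef, trace_mul_cycle, hU2, Matrix.one_mul, hPtr]
  -- apply minimality
  have hmin' := hmin N hNsymm hNpsd hN1psd htrN
  -- unitary invariance of Frobenius norm
  have hinv : ∀ B : Matrix (Fin d) (Fin d) ℝ,
      ∑ i, ∑ j, ((U * B * star U) i j) ^ 2 = ∑ i, ∑ j, (B i j) ^ 2 := by
    intro B
    rw [sq_sum_eq_trace, sq_sum_eq_trace, ← star_eq_conjTranspose, ← star_eq_conjTranspose]
    have e1 : star (U * B * star U) * (U * B * star U)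
        = U * star B * (star U * U) * B * star U := by
      rw [StarMul.star_mul, StarMul.star_mul, star_star]; noncomm_ring
    rw [e1, hU1]
    have e2 : U * star B * 1 * B * star U = U * (star B * B) * star U := by noncomm_ring
    rw [e2, trace_mul_cycle, hU1, Matrix.one_mul]
  have hPA : P - A = U * (Q - D) * star U := by
    rw [hPQ, hspec, Matrix.mul_sub, Matrix.sub_mul]
  have hNA : N - A = U * (dQ - D) * star U := by
    rw [hNdef, hspec, Matrix.mul_sub, Matrix.sub_mul]
  rw [hPA, hNA, hinv, hinv] at hmin'
  -- pointwise decomposition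
  have hdecomp : ∀ i j : Fin d,
      ((Q - D) i j) ^ 2 = ((dQ - D) i j) ^ 2 + ((Q - dQ) i j) ^ 2 := by
    intro i j
    by_cases h : i = j
    · subst h
      simp [hdQdef, diagonal_apply_eq]
    · simp [hdQdef, hDdef, diagonal_apply_ne _ h]
  have hsum : ∑ i, ∑ j, ((Q - dQ) i j) ^ 2 ≤ 0 := by
    have e : ∑ i, ∑ j, ((Q - D) i j) ^ 2
        = ∑ i, ∑ j, ((dQ - D) i j) ^ 2 + ∑ i, ∑ j, ((Q - dQ) i j) ^ 2 := by
      rw [← Finset.sum_add_distrib]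
      refine Finset.sum_congr rfl fun i _ => ?_
      rw [← Finset.sum_add_distrib]
      exact Finset.sum_congr rfl fun j _ => hdecomp i j
    linarith
  have hQdQ : Q = dQ := by
    have hz : ∀ i ∈ Finset.univ, ∀ j ∈ Finset.univ, ((Q - dQ) i j) ^ 2 = 0 := by
      have := Finset.sum_eq_zero_iff_of_nonneg (fun i _ =>
        Finset.sum_nonneg (fun j _ => sq_nonneg ((Q - dQ) i j))) |>.mp
        (le_antisymm hsum (Finset.sum_nonneg (fun i _ =>
          Finset.sum_nonneg (fun j _ => sq_nonneg ((Q - dQ) i j)))))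
      intro i hi j hj
      exact (Finset.sum_eq_zero_iff_of_nonneg (fun j _ => sq_nonneg _)).mp (this i hi) j hj
    ext i j
    have := hz i (Finset.mem_univ i) j (Finset.mem_univ j)
    have h0 : (Q - dQ) i j = 0 := by
      exact pow_eq_zero_iff (two_ne_zero) |>.mp this
    have := sub_eq_zero.mp h0
    simpa [hdQdef] using this
  -- Q commutes with D
  have hcomm : Q * D = D * Q := by
    rw [hQdQ, hdQdef, hDdef, diagonal_mul_diagonal, diagonal_mul_diagonal]
    ext i j
    by_cases h : i = j
    · subst h; simp [mul_comm]
    · simp [Matrix.diagonal_apply_ne _ h]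
  calc P * A = (U * Q * star U) * (U * D * star U) := by rw [← hPQ, ← hspec]
    _ = U * (Q * D) * star U := by
        rw [show (U * Q * star U) * (U * D * star U) = U * Q * (star U * U) * D * star U by
          noncomm_ring, hU1]
        noncomm_ring
    _ = U * (D * Q) * star U := by rw [hcomm]
    _ = (U * D * star U) * (U * Q * star U) := by
        rw [show (U * D * star U) * (U * Q * star U) = U * D * (star U * U) * Q * star U by
          noncomm_ring, hU1]
        noncomm_ring
    _ = A * P := by rw [← hPQ, ← hspec]
end
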